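/- Let φ ∈ C²(ℝ², ℝ) with φ(0) = 0, |∇φ(0)| = 0 and Lip(φ) ≤ 1, let Ω_φ = {x ∈ C(0,1) : x³ < φ(x¹,x²)}, and let Q : Ω_φ → SO(3) be the rotation field defined from φ by Q(x) = Q(x¹,x²,φ(x¹,x²)), where at boundary points Q is the rotation about the axis ν × (0,0,1) through angle τ with cos τ = ν·(0,0,1). Then sup{|Q(x)n − n| : x ∈ Ω_φ, n ∈ S²} ≤ 9 Lip(φ). -/
import Mathlib


/-!
Statement 9 (Lemma `lem: Qn-n bound`): for the rotation field `Q` built from `φ`,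
`sup{|Q(x)n − n| : x ∈ Ω_φ, n ∈ S²} ≤ 9 Lip(φ)`.
-/

open MeasureTheory Metric Set
open scoped RealInnerProductSpace Topology

noncomputable section

abbrev E2 := EuclideanSpace ℝ (Fin 2)
abbrev E3 := EuclideanSpace ℝ (Fin 3)

/-- The open cylinder `C(a,r)`. -/
def cyl (a : E3) (r : ℝ) : Set E3 :=
  {y | Real.sqrt ((y 0 - a 0) ^ 2 + (y 1 - a 1) ^ 2) < r ∧ |y 2 - a 2| < r}

def proj2 (x : E3) : E2 := (WithLp.equiv 2 (Fin 2 → ℝ)).symm ![x 0, x 1]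

/-- `Ω_φ = {x ∈ C(0,1) : x³ < φ(x¹,x²)}`. -/
def Ωset (φ : E2 → ℝ) : Set E3 := {x ∈ cyl 0 1 | x 2 < φ (proj2 x)}

/-- `Lip(φ) = ‖∇φ‖_{L^∞}`. -/
def lipC (φ : E2 → ℝ) : ℝ := ⨆ x : E2, ‖fderiv ℝ φ x‖

/-- The partial derivatives `φ_{x¹}, φ_{x²}`. -/
def dφ (φ : E2 → ℝ) (p : E2) (i : Fin 2) : ℝ := fderiv ℝ φ p (EuclideanSpace.single i 1)

/-- The rotation `Q` about the axis `ν × (0,0,1)` through the angle `τ` with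
`cos τ = ν·(0,0,1) = (φ_{x¹}² + φ_{x²}² + 1)^{−1/2}`, given by its explicit matrix; at
points where `∇φ = 0` (where the formula has a removable singularity) it is the identity. -/
def Qmat (φ : E2 → ℝ) (p : E2) : Matrix (Fin 3) (Fin 3) ℝ :=
  let a := dφ φ p 0
  let b := dφ φ p 1
  if a ^ 2 + b ^ 2 = 0 then 1 else
    let ct := (Real.sqrt (a ^ 2 + b ^ 2 + 1))⁻¹
    let st := Real.sqrt ((a ^ 2 + b ^ 2) / (a ^ 2 + b ^ 2 + 1))
    Matrix.of
      ![![(b ^ 2 + a ^ 2 * ct) / (a ^ 2 + b ^ 2),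
          -(a * b * (1 - ct)) / (a ^ 2 + b ^ 2),
          a * st / Real.sqrt (a ^ 2 + b ^ 2)],
        ![-(a * b * (1 - ct)) / (a ^ 2 + b ^ 2),
          (a ^ 2 + b ^ 2 * ct) / (a ^ 2 + b ^ 2),
          b * st / Real.sqrt (a ^ 2 + b ^ 2)],
        ![-(a * st) / Real.sqrt (a ^ 2 + b ^ 2),
          -(b * st) / Real.sqrt (a ^ 2 + b ^ 2),
          ct]]

/-- Matrix–vector multiplication on `ℝ³` with the Euclidean norm. -/
def mulE (M : Matrix (Fin 3) (Fin 3) ℝ) (v : E3) : E3 :=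
  (WithLp.equiv 2 (Fin 3 → ℝ)).symm (M.mulVec ((WithLp.equiv 2 (Fin 3 → ℝ)) v))

/-- Abstract form of `Qmat` with atomic parameters. -/
def Qaux (a b : ℝ) : Matrix (Fin 3) (Fin 3) ℝ :=
  if a ^ 2 + b ^ 2 = 0 then 1 else
    let ct := (Real.sqrt (a ^ 2 + b ^ 2 + 1))⁻¹
    let st := Real.sqrt ((a ^ 2 + b ^ 2) / (a ^ 2 + b ^ 2 + 1))
    Matrix.of
      ![![(b ^ 2 + a ^ 2 * ct) / (a ^ 2 + b ^ 2),
          -(a * b * (1 - ct)) / (a ^ 2 + b ^ 2),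
          a * st / Real.sqrt (a ^ 2 + b ^ 2)],
        ![-(a * b * (1 - ct)) / (a ^ 2 + b ^ 2),
          (a ^ 2 + b ^ 2 * ct) / (a ^ 2 + b ^ 2),
          b * st / Real.sqrt (a ^ 2 + b ^ 2)],
        ![-(a * st) / Real.sqrt (a ^ 2 + b ^ 2),
          -(b * st) / Real.sqrt (a ^ 2 + b ^ 2),
          ct]]

set_option maxHeartbeats 1000000 in
lemma Qaux_bound (a b L : ℝ) (hL0 : 0 ≤ L) (hL1 : L ≤ 1)
    (hrL : Real.sqrt (a ^ 2 + b ^ 2) ≤ L)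
    (n : E3) (hnj : ∀ j : Fin 3, |n j| ≤ 1) :
    ‖mulE (Qaux a b) n - n‖ ≤ 9 * L := by
  by_cases hs0 : a ^ 2 + b ^ 2 = 0
  · have h1 : Qaux a b = 1 := by rw [Qaux, if_pos hs0]
    have h2 : mulE (Qaux a b) n = n := by
      rw [h1]; simp [mulE, Matrix.one_mulVec]
    rw [h2]
    simpa using by positivity
  · set s := a ^ 2 + b ^ 2 with hsdef
    have hs : 0 < s := lt_of_le_of_ne (by positivity) (Ne.symm hs0)
    set r := Real.sqrt s with hrdef
    have hr2 : r ^ 2 = s := Real.sq_sqrt hs.le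
    have hr0 : 0 < r := Real.sqrt_pos.2 hs
    have hsL : s ≤ L := by nlinarith
    set ct := (Real.sqrt (s + 1))⁻¹ with hctdef
    set st := Real.sqrt (s / (s + 1)) with hstdef
    have hsq1 : 1 ≤ Real.sqrt (s + 1) := by
      nlinarith [Real.sq_sqrt (by linarith : (0:ℝ) ≤ s + 1), Real.sqrt_nonneg (s + 1)]
    have hsqle : Real.sqrt (s + 1) ≤ s + 1 := by
      calc Real.sqrt (s + 1) ≤ Real.sqrt ((s + 1) ^ 2) :=
            Real.sqrt_le_sqrt (by nlinarith)
        _ = s + 1 := Real.sqrt_sq (by linarith)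
    have hct1 : ct ≤ 1 := by rw [hctdef]; exact inv_le_one_of_one_le₀ hsq1
    have hct0 : 0 < ct := by
      rw [hctdef]; exact inv_pos.2 (lt_of_lt_of_le one_pos hsq1)
    have h1ct : 1 - ct ≤ s := by
      have h1 : (s + 1)⁻¹ ≤ ct := by
        rw [hctdef]
        exact inv_anti₀ (lt_of_lt_of_le one_pos hsq1) hsqle
      have h2 : 1 - (s + 1)⁻¹ ≤ s := by
        have hpos : (0:ℝ) < s + 1 := by linarith
        rw [sub_le_iff_le_add, ← sub_le_iff_le_add', inv_eq_one_div, le_div_iff₀ hpos]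
        nlinarith
      linarith
    have hctL : 1 - ct ≤ L := h1ct.trans hsL
    have hst0 : 0 ≤ st := Real.sqrt_nonneg _
    have hstr : st ≤ r := by
      rw [hstdef, hrdef]
      exact Real.sqrt_le_sqrt (div_le_self hs.le (by linarith))
    have ha2 : a ^ 2 ≤ s := by nlinarith
    have hb2 : b ^ 2 ≤ s := by nlinarith
    have hab : |a * b| ≤ s := by
      rw [abs_mul]
      nlinarith [sq_abs a, sq_abs b, sq_nonneg (|a| - |b|), abs_nonneg a, abs_nonneg b]
    have haR : |a| ≤ r := by
      rw [← Real.sqrt_sq_eq_abs, hrdef]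
      exact Real.sqrt_le_sqrt ha2
    have hbR : |b| ≤ r := by
      rw [← Real.sqrt_sq_eq_abs, hrdef]
      exact Real.sqrt_le_sqrt hb2
    -- entry bounds
    have hE00 : |(b ^ 2 + a ^ 2 * ct) / s - 1| ≤ L := by
      have heq : (b ^ 2 + a ^ 2 * ct) / s - 1 = a ^ 2 * (ct - 1) / s := by
        field_simp
        rw [hsdef]; ring
      rw [heq, abs_div, abs_of_pos hs, div_le_iff₀ hs, abs_mul,
        abs_of_nonneg (by positivity : (0:ℝ) ≤ a ^ 2),
        abs_of_nonpos (by linarith : ct - 1 ≤ 0)]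
      nlinarith [mul_le_mul ha2 hctL (by linarith) hs.le]
    have hE11 : |(a ^ 2 + b ^ 2 * ct) / s - 1| ≤ L := by
      have heq : (a ^ 2 + b ^ 2 * ct) / s - 1 = b ^ 2 * (ct - 1) / s := by
        field_simp
        rw [hsdef]; ring
      rw [heq, abs_div, abs_of_pos hs, div_le_iff₀ hs, abs_mul,
        abs_of_nonneg (by positivity : (0:ℝ) ≤ b ^ 2),
        abs_of_nonpos (by linarith : ct - 1 ≤ 0)]
      nlinarith [mul_le_mul hb2 hctL (by linarith) hs.le]
    have hE01 : |(-(a * b * (1 - ct))) / s| ≤ L := by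
      rw [abs_div, abs_of_pos hs, div_le_iff₀ hs, abs_neg, abs_mul,
        abs_of_nonneg (by linarith : (0:ℝ) ≤ 1 - ct)]
      nlinarith [mul_le_mul hab hctL (by linarith) hs.le]
    have hE02 : |a * st / r| ≤ L := by
      rw [abs_div, abs_of_pos hr0, div_le_iff₀ hr0, abs_mul, abs_of_nonneg hst0]
      nlinarith [mul_le_mul (haR.trans hrL) hstr hst0 hL0]
    have hE12 : |b * st / r| ≤ L := by
      rw [abs_div, abs_of_pos hr0, div_le_iff₀ hr0, abs_mul, abs_of_nonneg hst0]
      nlinarith [mul_le_mul (hbR.trans hrL) hstr hst0 hL0]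
    have hE22 : |ct - 1| ≤ L := by
      rw [abs_of_nonpos (by linarith : ct - 1 ≤ 0)]
      linarith
    set w := mulE (Qaux a b) n - n with hw
    have hQ : Qaux a b = Matrix.of
      ![![(b ^ 2 + a ^ 2 * ct) / s, -(a * b * (1 - ct)) / s, a * st / r],
        ![-(a * b * (1 - ct)) / s, (a ^ 2 + b ^ 2 * ct) / s, b * st / r],
        ![-(a * st) / r, -(b * st) / r, ct]] := by
      rw [Qaux, if_neg hs0]
    have key : ∀ e0 e1 e2 : ℝ, |e0| ≤ L → |e1| ≤ L → |e2| ≤ L →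
        |e0 * n 0 + e1 * n 1 + e2 * n 2| ≤ 3 * L := by
      intro e0 e1 e2 h0 h1 h2
      have b0 : |e0 * n 0| ≤ L := by
        rw [abs_mul]; nlinarith [abs_nonneg e0, abs_nonneg (n 0), hnj 0]
      have b1 : |e1 * n 1| ≤ L := by
        rw [abs_mul]; nlinarith [abs_nonneg e1, abs_nonneg (n 1), hnj 1]
      have b2 : |e2 * n 2| ≤ L := by
        rw [abs_mul]; nlinarith [abs_nonneg e2, abs_nonneg (n 2), hnj 2]
      calc |e0 * n 0 + e1 * n 1 + e2 * n 2|
          ≤ |e0 * n 0 + e1 * n 1| + |e2 * n 2| := abs_add_le _ _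
        _ ≤ |e0 * n 0| + |e1 * n 1| + |e2 * n 2| := by
            have := abs_add_le (e0 * n 0) (e1 * n 1); linarith
        _ ≤ 3 * L := by linarith
    have hw0 : |w 0| ≤ 3 * L := by
      have hcomp : w 0 = (Qaux a b).mulVec (fun i => n i) 0 - n 0 := rfl
      rw [hcomp, hQ]
      simp only [Matrix.mulVec, dotProduct, Fin.sum_univ_three, Matrix.of_apply,
        Matrix.cons_val', Matrix.cons_val_zero, Matrix.cons_val_one, Matrix.head_cons,
        Matrix.cons_val_two, Matrix.tail_cons, Matrix.empty_val', Matrix.cons_val_fin_one,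
        Matrix.head_fin_const]
      have heq : (b ^ 2 + a ^ 2 * ct) / s * n 0 + -(a * b * (1 - ct)) / s * n 1
          + a * st / r * n 2 - n 0
          = ((b ^ 2 + a ^ 2 * ct) / s - 1) * n 0 + (-(a * b * (1 - ct)) / s) * n 1
          + (a * st / r) * n 2 := by ring
      rw [heq]
      exact key _ _ _ hE00 hE01 hE02
    have hw1 : |w 1| ≤ 3 * L := by
      have hcomp : w 1 = (Qaux a b).mulVec (fun i => n i) 1 - n 1 := rfl
      rw [hcomp, hQ]
      simp only [Matrix.mulVec, dotProduct, Fin.sum_univ_three, Matrix.of_apply,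
        Matrix.cons_val', Matrix.cons_val_zero, Matrix.cons_val_one, Matrix.head_cons,
        Matrix.cons_val_two, Matrix.tail_cons, Matrix.empty_val', Matrix.cons_val_fin_one,
        Matrix.head_fin_const]
      have heq : -(a * b * (1 - ct)) / s * n 0 + (a ^ 2 + b ^ 2 * ct) / s * n 1
          + b * st / r * n 2 - n 1
          = (-(a * b * (1 - ct)) / s) * n 0 + ((a ^ 2 + b ^ 2 * ct) / s - 1) * n 1
          + (b * st / r) * n 2 := by ring
      rw [heq]
      exact key _ _ _ hE01 hE11 hE12
    have hw2 : |w 2| ≤ 3 * L := by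
      have hcomp : w 2 = (Qaux a b).mulVec (fun i => n i) 2 - n 2 := rfl
      rw [hcomp, hQ]
      simp only [Matrix.mulVec, dotProduct, Fin.sum_univ_three, Matrix.of_apply,
        Matrix.cons_val', Matrix.cons_val_zero, Matrix.cons_val_one, Matrix.head_cons,
        Matrix.cons_val_two, Matrix.tail_cons, Matrix.empty_val', Matrix.cons_val_fin_one,
        Matrix.head_fin_const]
      have heq : -(a * st) / r * n 0 + -(b * st) / r * n 1 + ct * n 2 - n 2
          = (-(a * st / r)) * n 0 + (-(b * st / r)) * n 1 + (ct - 1) * n 2 := by ring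
      rw [heq]
      exact key _ _ _ (by rw [abs_neg]; exact hE02) (by rw [abs_neg]; exact hE12) hE22
    rw [EuclideanSpace.norm_eq]
    have hsum : ∑ i, ‖w i‖ ^ 2 ≤ (9 * L) ^ 2 := by
      rw [Fin.sum_univ_three]
      rw [Real.norm_eq_abs, Real.norm_eq_abs, Real.norm_eq_abs]
      nlinarith [abs_nonneg (w 0), abs_nonneg (w 1), abs_nonneg (w 2), sq_abs (w 0),
        sq_abs (w 1), sq_abs (w 2), hw0, hw1, hw2]
    calc Real.sqrt (∑ i, ‖w i‖ ^ 2) ≤ Real.sqrt ((9 * L) ^ 2) := Real.sqrt_le_sqrt hsum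
      _ = 9 * L := Real.sqrt_sq (by positivity)

/-- If `φ ∈ C²(ℝ²,ℝ)`, `φ(0) = 0`, `∇φ(0) = 0` and `Lip(φ) ≤ 1`, then
`|Q(x)n − n| ≤ 9 Lip(φ)` for all `x ∈ Ω_φ` and all unit vectors `n ∈ S²`, where
`Q(x) = Q(x¹,x²,φ(x¹,x²))` depends only on the horizontal coordinates. -/
theorem stmt9 (φ : E2 → ℝ) (hC2 : ContDiff ℝ 2 φ) (h0 : φ 0 = 0)
    (h0' : fderiv ℝ φ 0 = 0) (hlip : LipschitzWith 1 φ) :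
    ∀ x ∈ Ωset φ, ∀ n : E3, ‖n‖ = 1 →
      ‖mulE (Qmat φ (proj2 x)) n - n‖ ≤ 9 * lipC φ := by
  intro x _ n hn
  set L := lipC φ with hLdef
  have hbdd : BddAbove (Set.range fun y : E2 => ‖fderiv ℝ φ y‖) := by
    refine ⟨1, ?_⟩
    rintro _ ⟨y, rfl⟩
    simpa using norm_fderiv_le_of_lipschitz ℝ hlip
  have hLle : ∀ y : E2, ‖fderiv ℝ φ y‖ ≤ L := fun y => le_ciSup hbdd y
  have hL1 : L ≤ 1 := by
    refine ciSup_le fun y => ?_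
    simpa using norm_fderiv_le_of_lipschitz ℝ hlip
  have hL0 : 0 ≤ L := le_trans (norm_nonneg _) (hLle 0)
  have hnj : ∀ j : Fin 3, |n j| ≤ 1 := by
    intro j
    have h := EuclideanSpace.norm_eq n
    rw [hn] at h
    have h2 : ∑ i, ‖n i‖ ^ 2 = 1 := by
      nlinarith [Real.sq_sqrt (by positivity : (0:ℝ) ≤ ∑ i, ‖n i‖ ^ 2), h.symm]
    have h3 : ‖n j‖ ^ 2 ≤ 1 := by
      rw [← h2]
      exact Finset.single_le_sum (f := fun i => ‖n i‖ ^ 2) (fun i _ => by positivity)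
        (Finset.mem_univ j)
    rw [Real.norm_eq_abs] at h3
    nlinarith [abs_nonneg (n j)]
  have hQeq : Qmat φ (proj2 x) = Qaux (dφ φ (proj2 x) 0) (dφ φ (proj2 x) 1) := rfl
  rw [hQeq]
  refine Qaux_bound _ _ L hL0 hL1 ?_ n hnj
  -- gradient bound
  set p := proj2 x with hp
  set D := fderiv ℝ φ p with hD
  set a := dφ φ p 0 with ha
  set b := dφ φ p 1 with hb
  have hDv : D (a • EuclideanSpace.single (0 : Fin 2) (1:ℝ)
      + b • EuclideanSpace.single (1 : Fin 2) (1:ℝ)) = a ^ 2 + b ^ 2 := by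
    rw [D.map_add, D.map_smul, D.map_smul]
    simp only [smul_eq_mul]
    rw [ha, hb]
    simp only [dφ, ← hD]
    ring
  have hvnorm : ‖a • EuclideanSpace.single (0 : Fin 2) (1:ℝ)
      + b • EuclideanSpace.single (1 : Fin 2) (1:ℝ)‖ = Real.sqrt (a ^ 2 + b ^ 2) := by
    rw [EuclideanSpace.norm_eq]
    congr 1
    rw [Fin.sum_univ_two]
    simp [EuclideanSpace.single_apply, Real.norm_eq_abs, sq_abs]
  have hle := D.le_opNorm (a • EuclideanSpace.single (0 : Fin 2) (1:ℝ)
      + b • EuclideanSpace.single (1 : Fin 2) (1:ℝ))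
  rw [hDv, hvnorm, Real.norm_eq_abs, abs_of_nonneg (by positivity : (0:ℝ) ≤ a ^ 2 + b ^ 2)]
    at hle
  have hDL : ‖D‖ ≤ L := hLle p
  rcases eq_or_lt_of_le (Real.sqrt_nonneg (a ^ 2 + b ^ 2)) with h | h
  · rw [← h]; exact hL0
  · have hs : Real.sqrt (a ^ 2 + b ^ 2) ^ 2 = a ^ 2 + b ^ 2 := Real.sq_sqrt (by positivity)
    nlinarith [mul_le_mul_of_nonneg_right hDL h.le]
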